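/- For b > 1 and t ∈ [0,1], 0 ≤ b · arcsin(t/b) - t ≤ (π/2 - 1) t³ / b². -/

import Mathlib

/-!
With `c = π/2 - 1`, the function `G u = u + c u³ - arcsin u` vanishes at `0` and at `1`.
Its derivative `1 + 3cu² - 1/√(1 - u²)` is negative exactly when `(1 + 3cu²)²(1 - u²) < 1`,
and as `u` grows this cubic in `u²` never climbs back to `1` once it has dropped below it.
So `G'` changes sign at most once, from `+` to `-`, and `G` stays nonnegative on `[0, 1]`;
the theorem is this bound at `s = t / b`, scaled by `b`.
-/

open Real Set

theorem nonneg_of_deriv_neg_imp_nonpos {f f' : ℝ → ℝ} {a b s : ℝ}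
    (hf : ContinuousOn f (Icc a b)) (hf' : ∀ x ∈ Ioo a b, HasDerivAt f (f' x) x)
    (hsign : ∀ x ∈ Ioo a b, ∀ y ∈ Ioo a b, x < y → f' x < 0 → f' y ≤ 0)
    (ha : 0 ≤ f a) (hb : 0 ≤ f b) (hs : s ∈ Icc a b) : 0 ≤ f s := by
  by_contra! hfs
  have has : a < s := hs.1.lt_of_ne (by rintro rfl; linarith)
  have hsb : s < b := hs.2.lt_of_ne (by rintro rfl; linarith)
  obtain ⟨x, hx, hfx⟩ := exists_hasDerivAt_eq_slope f f' has
    (hf.mono (Icc_subset_Icc le_rfl hs.2)) fun x hx ↦ hf' x ⟨hx.1, hx.2.trans hsb⟩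
  obtain ⟨y, hy, hfy⟩ := exists_hasDerivAt_eq_slope f f' hsb
    (hf.mono (Icc_subset_Icc hs.1 le_rfl)) fun y hy ↦ hf' y ⟨has.trans hy.1, hy.2⟩
  have hx_neg : f' x < 0 := hfx ▸ div_neg_of_neg_of_pos (by linarith) (by linarith)
  have hy_pos : 0 < f' y := hfy ▸ div_pos (by linarith) (by linarith)
  have := hsign x ⟨hx.1, hx.2.trans hsb⟩ y ⟨has.trans hy.1, hy.2⟩ (hx.2.trans hy.1) hx_neg
  linarith

theorem one_add_mul_sq_mul_one_sub_lt_one_of_le {c X Y : ℝ} (hc0 : 0 ≤ c) (hc : 3 * c ≤ 2)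
    (hX : 0 ≤ X) (hXY : X ≤ Y) (h : (1 + 3 * c * X) ^ 2 * (1 - X) < 1) :
    (1 + 3 * c * Y) ^ 2 * (1 - Y) < 1 := by
  set q : ℝ → ℝ := fun X ↦ 6 * c - 1 + (9 * c ^ 2 - 6 * c) * X - 9 * c ^ 2 * X ^ 2
  have hq : ∀ X, (1 + 3 * c * X) ^ 2 * (1 - X) = 1 + X * q X := fun X ↦ by ring
  have hq_anti : q Y ≤ q X := by
    have : q Y - q X = (Y - X) * (9 * c ^ 2 - 6 * c - 9 * c ^ 2 * (X + Y)) := by ring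
    have hslope : 9 * c ^ 2 - 6 * c - 9 * c ^ 2 * (X + Y) ≤ 0 := by
      nlinarith [mul_nonneg hc0 (sub_nonneg.2 hc),
        mul_nonneg (sq_nonneg c) (add_nonneg hX (hX.trans hXY))]
    nlinarith [mul_nonpos_of_nonneg_of_nonpos (sub_nonneg.2 hXY) hslope]
  rw [hq] at h ⊢
  have hX_pos : 0 < X := hX.lt_of_ne (by rintro rfl; simp at h)
  have hqX : q X < 0 := by nlinarith
  linarith [mul_neg_of_pos_of_neg (hX_pos.trans_le hXY) (hq_anti.trans_lt hqX)]

theorem one_add_mul_sq_sub_one_div_sqrt_neg_iff {c u : ℝ} (hc0 : 0 ≤ c)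
    (hu : u ∈ Ioo (-1) 1) :
    1 + 3 * c * u ^ 2 - 1 / √(1 - u ^ 2) < 0 ↔ (1 + 3 * c * u ^ 2) ^ 2 * (1 - u ^ 2) < 1 := by
  have hw : 0 < 1 - u ^ 2 := by nlinarith [hu.1, hu.2]
  rw [sub_neg, lt_div_iff₀ (sqrt_pos.2 hw),
    ← pow_lt_one_iff_of_nonneg (by positivity) two_ne_zero, mul_pow, sq_sqrt hw.le]

theorem hasDerivAt_add_mul_cube_sub_arcsin (c : ℝ) {u : ℝ} (hu : u ∈ Ioo (-1) 1) :
    HasDerivAt (fun u ↦ u + c * u ^ 3 - arcsin u) (1 + 3 * c * u ^ 2 - 1 / √(1 - u ^ 2)) u := by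
  have := ((hasDerivAt_id u).add ((hasDerivAt_pow 3 u).const_mul c)).sub
    (hasDerivAt_arcsin hu.1.ne' hu.2.ne)
  exact this.congr_deriv (by norm_num; ring)

theorem self_le_arcsin {s : ℝ} (h0 : 0 ≤ s) (h1 : s ≤ 1) : s ≤ arcsin s := by
  simpa only [sin_arcsin (by linarith) h1] using sin_le (arcsin_nonneg.2 h0)

theorem arcsin_le_add_mul_cube {s : ℝ} (h0 : 0 ≤ s) (h1 : s ≤ 1) :
    arcsin s ≤ s + (π / 2 - 1) * s ^ 3 := by
  have hc0 : 0 ≤ π / 2 - 1 := by linarith [pi_gt_three]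
  have hc : 3 * (π / 2 - 1) ≤ 2 := by linarith [pi_lt_d2]
  set c := π / 2 - 1
  have hIoo : Ioo (0 : ℝ) 1 ⊆ Ioo (-1) 1 := Ioo_subset_Ioo_left (by norm_num)
  have hG := nonneg_of_deriv_neg_imp_nonpos (f := fun u ↦ u + c * u ^ 3 - arcsin u)
    (a := 0) (b := 1) (by fun_prop)
    (fun u hu ↦ hasDerivAt_add_mul_cube_sub_arcsin c (hIoo hu))
    (fun x hx y hy hxy hneg ↦ by
      rw [one_add_mul_sq_sub_one_div_sqrt_neg_iff hc0 (hIoo hx)] at hneg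
      refine ((one_add_mul_sq_sub_one_div_sqrt_neg_iff hc0 (hIoo hy)).2 ?_).le
      exact one_add_mul_sq_mul_one_sub_lt_one_of_le hc0 hc (sq_nonneg x)
        (pow_le_pow_left₀ hx.1.le hxy.le 2) hneg)
    (by simp) (by simp [arcsin_one, c]) ⟨h0, h1⟩
  linarith

theorem b_arcsin_bound (b t : ℝ) (hb : 1 < b) (ht : t ∈ Set.Icc (0:ℝ) 1) :
    0 ≤ b * Real.arcsin (t / b) - t ∧
      b * Real.arcsin (t / b) - t ≤ (π / 2 - 1) * t ^ 3 / b ^ 2 := by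
  obtain ⟨ht0, ht1⟩ := ht
  have hb0 : 0 < b := by linarith
  have hs0 : 0 ≤ t / b := div_nonneg ht0 hb0.le
  have hs1 : t / b ≤ 1 := (div_le_one hb0).2 (by linarith)
  have hgap : b * arcsin (t / b) - t = b * (arcsin (t / b) - t / b) := by field_simp
  have hcube : (π / 2 - 1) * t ^ 3 / b ^ 2 = b * ((π / 2 - 1) * (t / b) ^ 3) := by field_simp
  rw [hgap, hcube]
  exact ⟨mul_nonneg hb0.le (sub_nonneg.2 (self_le_arcsin hs0 hs1)),
    mul_le_mul_of_nonneg_left (by linarith [arcsin_le_add_mul_cube hs0 hs1]) hb0.le⟩
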